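/- Let a₁,…,a_d > 0, λ > 0, and let ℰ_a = {x ∈ ℝ^d : Σ_i x_i²/a_i² ≤ 1}. For g ∼ N(0, I_d), log E[ exp( sup_{x ∈ ℰ_a} (⟨x,g⟩ − ‖x‖²/2) ) ] ≤ λ/2 + (1/2) Σ_{i=1}^d log(1 + a_i²/λ). -/

import Mathlib

/-!
Relaxing the constraint `∑ xᵢ²/aᵢ² ≤ 1` by the penalty `(λ/2)(∑ xᵢ²/aᵢ² - 1)` makes the objective
separate in the coordinates, and completing the square gives
`x g - x²/2 - (λ/2) x²/a² ≤ c g²/2` with `c = a²/(a² + λ) < 1`. Hence the exponential of the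
supremum is at most `e^{λ/2} ∏ᵢ exp(cᵢ gᵢ²/2)`, and for a standard Gaussian `g`,
`E exp(c g²/2) = (1 - c)^{-1/2} = (1 + a²/λ)^{1/2}`.
-/

open MeasureTheory ProbabilityTheory Metric Set
open scoped ENNReal NNReal

noncomputable section

/-- The standard Gaussian measure `N(0, I_d)` on `ℝ^d`. -/
def stdGaussian (d : ℕ) : Measure (EuclideanSpace ℝ (Fin d)) :=
  (Measure.pi fun _ : Fin d => gaussianReal 0 1).map
    ⇑(EuclideanSpace.equiv (Fin d) ℝ).symm

open Real

lemma integrable_gaussianReal_iff {m : ℝ} {v : ℝ≥0} (hv : v ≠ 0) {f : ℝ → ℝ} :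
    Integrable f (gaussianReal m v) ↔ Integrable (fun x => gaussianPDFReal m v x * f x) := by
  rw [gaussianReal_of_var_ne_zero _ hv, integrable_withDensity_iff_integrable_smul'
    (measurable_gaussianPDF _ _) (ae_of_all _ fun _ => gaussianPDF_lt_top)]
  simp [gaussianPDF, ENNReal.toReal_ofReal (gaussianPDFReal_nonneg _ _ _)]

lemma gaussianPDFReal_mul_exp_mul_sq (c x : ℝ) :
    gaussianPDFReal 0 1 x * exp (c * x ^ 2 / 2) = (√(2 * π))⁻¹ * exp (-((1 - c) / 2) * x ^ 2) := by
  rw [gaussianPDFReal, NNReal.coe_one, mul_one, sub_zero, mul_assoc, ← exp_add]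
  congr 2
  ring

lemma integrable_exp_mul_sq_gaussianReal {c : ℝ} (hc : c < 1) :
    Integrable (fun t => exp (c * t ^ 2 / 2)) (gaussianReal 0 1) := by
  rw [integrable_gaussianReal_iff one_ne_zero]
  simp_rw [gaussianPDFReal_mul_exp_mul_sq]
  exact (integrable_exp_neg_mul_sq (by linarith)).const_mul _

lemma integral_exp_mul_sq_gaussianReal {c : ℝ} (hc : c < 1) :
    ∫ t, exp (c * t ^ 2 / 2) ∂(gaussianReal 0 1) = √((1 - c)⁻¹) := by
  rw [integral_gaussianReal_eq_integral_smul one_ne_zero]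
  simp_rw [smul_eq_mul, gaussianPDFReal_mul_exp_mul_sq]
  rw [integral_const_mul, integral_gaussian, ← sqrt_inv, ← sqrt_mul (by positivity)]
  congr 1
  have : 0 < 1 - c := by linarith
  field_simp

lemma integrable_exp_sum_mul_sq_pi_gaussianReal {ι : Type*} [Fintype ι] {c : ι → ℝ}
    (hc : ∀ i, c i < 1) :
    Integrable (fun y : ι → ℝ => exp (∑ i, c i * y i ^ 2 / 2))
      (Measure.pi fun _ => gaussianReal 0 1) := by
  simp_rw [exp_sum]
  exact Integrable.fintype_prod fun i => integrable_exp_mul_sq_gaussianReal (hc i)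

lemma integral_exp_sum_mul_sq_pi_gaussianReal {ι : Type*} [Fintype ι] {c : ι → ℝ}
    (hc : ∀ i, c i < 1) :
    ∫ y : ι → ℝ, exp (∑ i, c i * y i ^ 2 / 2) ∂(Measure.pi fun _ => gaussianReal 0 1)
      = ∏ i, √((1 - c i)⁻¹) := by
  simp_rw [exp_sum]
  rw [integral_fintype_prod_eq_prod fun i t => exp (c i * t ^ 2 / 2)]
  exact Finset.prod_congr rfl fun i _ => integral_exp_mul_sq_gaussianReal (hc i)

lemma integral_stdGaussian {d : ℕ} (f : EuclideanSpace ℝ (Fin d) → ℝ) :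
    ∫ g, f g ∂(stdGaussian d)
      = ∫ y, f (WithLp.toLp 2 y) ∂(Measure.pi fun _ : Fin d => gaussianReal 0 1) :=
  integral_map_equiv (MeasurableEquiv.toLp 2 (Fin d → ℝ)) f

lemma mul_sub_sq_div_two_le {a lam x g : ℝ} (ha : 0 < a) (hlam : 0 < lam) :
    x * g - x ^ 2 / 2 ≤ a ^ 2 / (a ^ 2 + lam) * g ^ 2 / 2 + lam / 2 * (x ^ 2 / a ^ 2) := by
  rw [div_mul_eq_mul_div, div_div, mul_div_assoc', div_add_div _ _ (by positivity) (by positivity),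
    le_div_iff₀ (by positivity)]
  nlinarith [sq_nonneg ((a ^ 2 + lam) * x - a ^ 2 * g)]

lemma inner_sub_norm_sq_div_two_le {ι : Type*} [Fintype ι] {a : ι → ℝ} (ha : ∀ i, 0 < a i)
    {lam : ℝ} (hlam : 0 < lam) {x : EuclideanSpace ℝ ι} (hx : ∑ i, x i ^ 2 / a i ^ 2 ≤ 1)
    (g : EuclideanSpace ℝ ι) :
    inner ℝ x g - ‖x‖ ^ 2 / 2 ≤ lam / 2 + ∑ i, a i ^ 2 / (a i ^ 2 + lam) * g i ^ 2 / 2 := by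
  have hinner : inner ℝ x g = ∑ i, x i * g i := by
    simp [PiLp.inner_apply, mul_comm]
  calc inner ℝ x g - ‖x‖ ^ 2 / 2 = ∑ i, (x i * g i - x i ^ 2 / 2) := by
        rw [hinner, EuclideanSpace.real_norm_sq_eq, Finset.sum_sub_distrib, Finset.sum_div]
    _ ≤ ∑ i, (a i ^ 2 / (a i ^ 2 + lam) * g i ^ 2 / 2 + lam / 2 * (x i ^ 2 / a i ^ 2)) :=
        Finset.sum_le_sum fun i _ => mul_sub_sq_div_two_le (ha i) hlam
    _ = ∑ i, a i ^ 2 / (a i ^ 2 + lam) * g i ^ 2 / 2 + lam / 2 * ∑ i, x i ^ 2 / a i ^ 2 := by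
        rw [Finset.sum_add_distrib, Finset.mul_sum]
    _ ≤ lam / 2 + ∑ i, a i ^ 2 / (a i ^ 2 + lam) * g i ^ 2 / 2 := by
        nlinarith

lemma integral_exp_iSup_ellipsoid_le {d : ℕ} {a : Fin d → ℝ} (ha : ∀ i, 0 < a i)
    {lam : ℝ} (hlam : 0 < lam) :
    ∫ g, exp (⨆ x : {x : EuclideanSpace ℝ (Fin d) // ∑ i, x i ^ 2 / a i ^ 2 ≤ 1},
        (inner ℝ (x : EuclideanSpace ℝ (Fin d)) g - ‖(x : EuclideanSpace ℝ (Fin d))‖ ^ 2 / 2))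
      ∂(stdGaussian d)
    ≤ exp (lam / 2) * ∏ i, √(1 + a i ^ 2 / lam) := by
  set c : Fin d → ℝ := fun i => a i ^ 2 / (a i ^ 2 + lam)
  have hc : ∀ i, c i < 1 := fun i => (div_lt_one (by positivity)).2 (by linarith)
  have hc_inv : ∀ i, (1 - c i)⁻¹ = 1 + a i ^ 2 / lam := fun i => by
    rw [one_sub_div (by positivity), add_sub_cancel_left, inv_div, add_div, div_self hlam.ne',
      add_comm]
  have : Nonempty {x : EuclideanSpace ℝ (Fin d) // ∑ i, x i ^ 2 / a i ^ 2 ≤ 1} := ⟨⟨0, by simp⟩⟩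
  rw [integral_stdGaussian]
  calc _ ≤ ∫ y, exp (lam / 2) * exp (∑ i, c i * y i ^ 2 / 2)
          ∂(Measure.pi fun _ : Fin d => gaussianReal 0 1) := by
        refine integral_mono_of_nonneg (ae_of_all _ fun _ => (exp_pos _).le)
          ((integrable_exp_sum_mul_sq_pi_gaussianReal hc).const_mul _) (ae_of_all _ fun y => ?_)
        dsimp only
        rw [← exp_add]
        exact exp_le_exp.2 (ciSup_le fun x => inner_sub_norm_sq_div_two_le ha hlam x.2 _)
    _ = exp (lam / 2) * ∏ i, √(1 + a i ^ 2 / lam) := by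
        rw [integral_const_mul, integral_exp_sum_mul_sq_pi_gaussianReal hc]
        simp_rw [hc_inv]

lemma log_le_log_of_nonneg {x y : ℝ} (hx : 0 ≤ x) (hxy : x ≤ y) (hy : 0 ≤ log y) :
    log x ≤ log y := by
  rcases hx.eq_or_lt with rfl | hx
  · rwa [log_zero]
  · exact log_le_log hx hxy

theorem statement13 {d : ℕ} (a : Fin d → ℝ) (ha : ∀ i, 0 < a i)
    (lam : ℝ) (hlam : 0 < lam) :
    Real.log (∫ g, Real.exp
        (⨆ x : {x : EuclideanSpace ℝ (Fin d) // ∑ i, (x i) ^ 2 / (a i) ^ 2 ≤ 1},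
          ((inner ℝ (x : EuclideanSpace ℝ (Fin d)) g : ℝ)
            - ‖(x : EuclideanSpace ℝ (Fin d))‖ ^ 2 / 2))
      ∂(stdGaussian d))
    ≤ lam / 2 + (1 / 2) * ∑ i, Real.log (1 + (a i) ^ 2 / lam) := by
  have hlog_bound : log (exp (lam / 2) * ∏ i, √(1 + a i ^ 2 / lam))
      = lam / 2 + (1 / 2) * ∑ i, log (1 + a i ^ 2 / lam) := by
    rw [log_mul (exp_ne_zero _) (by positivity), log_exp, log_prod fun i _ => by positivity,
      Finset.mul_sum]
    congr 1
    exact Finset.sum_congr rfl fun i _ => by rw [log_sqrt (by positivity)]; ring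
  rw [← hlog_bound]
  -- the supremum is never shown integrable, so the integral may be the junk value `0`
  refine log_le_log_of_nonneg (integral_nonneg fun _ => (exp_pos _).le)
    (integral_exp_iSup_ellipsoid_le ha hlam) ?_
  have hsum : 0 ≤ ∑ i, log (1 + a i ^ 2 / lam) := Finset.sum_nonneg fun i _ =>
    log_nonneg (le_add_of_nonneg_right (by positivity))
  rw [hlog_bound]
  linarith
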